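/- Let 𝔽 be a subfield of a field 𝕂. Functions f, h : 𝔽 → 𝕂 satisfy f(xy) = h(x)h(y) for all x, y ∈ 𝔽 if and only if there exists a multiplicative function m : 𝔽 → 𝕂 with h(x) = h(1)m(x) and f(x) = h(1)²m(x) for all x ∈ 𝔽. -/

import Mathlib

/-
Setting y = 1 gives f x = h x * h 1, hence h (x * y) * h 1 = h x * h y. If h 1 ≠ 0 this says
exactly that m = h / h 1 is multiplicative. If h 1 = 0, then h x ^ 2 = f (x * x) = h (x * x) * h 1 = 0,
so h and f vanish identically and m = 0 works.
-/

section
variable {M K : Type*} [MulOneClass M] {f h : M → K}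

theorem apply_eq_mul_apply_one [Mul K] (hf : ∀ x y, f (x * y) = h x * h y) (x : M) :
    f x = h x * h 1 := by
  simpa using hf x 1

theorem apply_mul_mul_apply_one [Mul K] (hf : ∀ x y, f (x * y) = h x * h y) (x y : M) :
    h (x * y) * h 1 = h x * h y := by
  rw [← apply_eq_mul_apply_one hf, hf]

theorem eq_zero_of_apply_one_eq_zero [MulZeroClass K] [NoZeroDivisors K]
    (hf : ∀ x y, f (x * y) = h x * h y) (h1 : h 1 = 0) (x : M) : h x = 0 :=
  mul_self_eq_zero.mp <| by rw [← hf, apply_eq_mul_apply_one hf, h1, mul_zero]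

theorem exists_multiplicative_of_apply_mul_eq_mul [CommGroupWithZero K]
    (hf : ∀ x y, f (x * y) = h x * h y) :
    ∃ m : M → K, (∀ x y, m (x * y) = m x * m y) ∧ (∀ x, h x = h 1 * m x) ∧
      ∀ x, f x = h 1 ^ 2 * m x := by
  by_cases h1 : h 1 = 0
  · refine ⟨0, fun _ _ => (mul_zero 0).symm, fun x => ?_, fun x => ?_⟩
    · simp [eq_zero_of_apply_one_eq_zero hf h1 x]
    · simp [apply_eq_mul_apply_one hf, h1]
  · refine ⟨fun x => h x / h 1, fun x y => ?_, fun x => ?_, fun x => ?_⟩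
    · rw [div_mul_div_comm, ← apply_mul_mul_apply_one hf, mul_div_mul_right _ _ h1]
    · rw [mul_div_cancel₀ _ h1]
    · rw [apply_eq_mul_apply_one hf, sq, mul_assoc, mul_div_cancel₀ _ h1, mul_comm]

end

theorem apply_mul_eq_mul_of_multiplicative {M K : Type*} [Mul M] [CommMonoid K] {f h m : M → K}
    (hm : ∀ x y, m (x * y) = m x * m y) (c : K) (hh : ∀ x, h x = c * m x)
    (hf : ∀ x, f x = c ^ 2 * m x) (x y : M) : f (x * y) = h x * h y := by
  rw [hf, hm, hh x, hh y, sq, mul_mul_mul_comm]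

theorem stmt_10 (K : Type*) [Field K] (F : Subfield K) (f h : F → K) :
    (∀ x y : F, f (x * y) = h x * h y) ↔
      ∃ m : F → K, (∀ x y : F, m (x * y) = m x * m y) ∧
        (∀ x : F, h x = h 1 * m x) ∧
        ∀ x : F, f x = h 1 ^ 2 * m x :=
  ⟨exists_multiplicative_of_apply_mul_eq_mul,
    fun ⟨_, hm, hh, hf⟩ => apply_mul_eq_mul_of_multiplicative hm _ hh hf⟩
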